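/- Let t > 0, 0 < y < t and F(x) = |x| + (x − y)²/(2t). Then the normalized mean satisfies lim_{T→0⁺} (1/T) · (∫_ℝ x·exp(−F(x)/T) dx) / (∫_ℝ exp(−F(x)/T) dx) = 2(y/t)/(1 − (y/t)²) = m₁(y/t), and the normalized second moment satisfies lim_{T→0⁺} (1/T²) · (∫_ℝ x²·exp(−F(x)/T) dx) / (∫_ℝ exp(−F(x)/T) dx) = (1 − y/t)/(1 + y/t)² + (1 + y/t)/(1 − y/t)² = m₂(y/t). In particular, the bias of X_T(y,t) as an estimator of soft(y,t) = 0 is asymptotically T·m₁(y/t) and its mean square error is asymptotically T²·m₂(y/t). -/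

import Mathlib

/-!
Substituting `x = T u` turns `F(x)/T` into `y²/(2tT) + |u| - (y/t) u + T u²/(2t)`, so
`∫ xᵏ e^{-F/T} dx = T^{k+1} e^{-y²/(2tT)} ∫ uᵏ e^{au - |u| - T u²/(2t)} du` with `a = y/t`.
The prefactor `e^{-y²/(2tT)}` cancels in the normalized moments, and by dominated convergence the
remaining integrals tend, as `T → 0⁺`, to the moments `k!/(1-a)^{k+1} + (-1)ᵏ k!/(1+a)^{k+1}` of
the weight `e^{au - |u|}`, which are Gamma integrals on each half-line.
-/

open Filter MeasureTheory

/-- The one-dimensional objective `F(x) = |x| + (x − y)²/(2t)`. -/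
noncomputable def obj1 (y t x : ℝ) : ℝ := |x| + (x - y) ^ 2 / (2 * t)

open Set Real Topology Nat

section HalfLines

variable {E : Type*} [NormedAddCommGroup E] {f : ℝ → E}

theorem integrableOn_Iic_zero_of_integrableOn_Ioi_comp_neg
    (hf : IntegrableOn (fun x => f (-x)) (Ioi 0)) : IntegrableOn f (Iic 0) := by
  have neg_emb : MeasurableEmbedding fun x : ℝ => -x := (Homeomorph.neg ℝ).measurableEmbedding
  rw [← Measure.map_neg_eq_self (volume : Measure ℝ), neg_emb.integrableOn_map_iff]
  simp only [Function.comp_def, neg_preimage, neg_Iic, neg_zero]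
  exact (integrableOn_Ici_iff_integrableOn_Ioi).mpr hf

theorem integrable_of_integrableOn_Ioi_of_comp_neg (hpos : IntegrableOn f (Ioi 0))
    (hneg : IntegrableOn (fun x => f (-x)) (Ioi 0)) : Integrable f := by
  simpa only [Iic_union_Ioi, integrableOn_univ] using
    (integrableOn_Iic_zero_of_integrableOn_Ioi_comp_neg hneg).union hpos

theorem integral_eq_integral_Ioi_add_integral_Ioi_comp_neg [NormedSpace ℝ E]
    (hpos : IntegrableOn f (Ioi 0))
    (hneg : IntegrableOn (fun x => f (-x)) (Ioi 0)) :
    ∫ x, f x = (∫ x in Ioi 0, f x) + ∫ x in Ioi 0, f (-x) := by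
  rw [integral_comp_neg_Ioi, neg_zero, add_comm, intervalIntegral.integral_Iic_add_Ioi
      (integrableOn_Iic_zero_of_integrableOn_Ioi_comp_neg hneg) hpos]

end HalfLines

theorem integrableOn_pow_mul_exp_neg_mul_Ioi (k : ℕ) {c : ℝ} (hc : 0 < c) :
    IntegrableOn (fun u : ℝ => u ^ k * exp (-(c * u))) (Ioi 0) := by
  refine (integrableOn_rpow_mul_exp_neg_mul_rpow (s := k) (p := 1)
    (by linarith [k.cast_nonneg (α := ℝ)]) zero_lt_one hc).congr_fun (fun u _ => ?_)
    measurableSet_Ioi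
  simp only [rpow_natCast, rpow_one, neg_mul]

theorem integral_pow_mul_exp_neg_mul_Ioi (k : ℕ) {c : ℝ} (hc : 0 < c) :
    ∫ u in Ioi 0, u ^ k * exp (-(c * u)) = k ! / c ^ (k + 1) := by
  have h := integral_rpow_mul_exp_neg_mul_Ioi (a := k + 1) (by positivity) hc
  rw [add_sub_cancel_right, Gamma_nat_eq_factorial] at h
  norm_cast at h
  rw [h, one_div, inv_pow, inv_mul_eq_div]

noncomputable def laplaceMoment (a : ℝ) (k : ℕ) : ℝ :=
  k ! / (1 - a) ^ (k + 1) + (-1) ^ k * k ! / (1 + a) ^ (k + 1)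

section LaplaceMoment

variable {a : ℝ}

theorem integrableOn_Ioi_pow_mul_exp_mul_sub_abs (k : ℕ) (ha : a < 1) :
    IntegrableOn (fun u : ℝ => u ^ k * exp (a * u - |u|)) (Ioi 0) := by
  refine (integrableOn_pow_mul_exp_neg_mul_Ioi k (sub_pos.2 ha)).congr_fun
    (fun u (hu : 0 < u) => ?_) measurableSet_Ioi
  rw [abs_of_pos hu]
  ring_nf

theorem integrableOn_Ioi_pow_mul_exp_mul_sub_abs_comp_neg (k : ℕ) (ha : -1 < a) :
    IntegrableOn (fun u : ℝ => (-u) ^ k * exp (a * -u - |-u|)) (Ioi 0) := by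
  refine IntegrableOn.congr_fun
    ((integrableOn_pow_mul_exp_neg_mul_Ioi k (by linarith : 0 < 1 + a)).const_mul ((-1) ^ k))
    (fun u (hu : 0 < u) => ?_) measurableSet_Ioi
  rw [abs_neg, abs_of_pos hu, neg_pow]
  ring_nf

theorem integrable_pow_mul_exp_mul_sub_abs (k : ℕ) (ha : |a| < 1) :
    Integrable fun u : ℝ => u ^ k * exp (a * u - |u|) :=
  integrable_of_integrableOn_Ioi_of_comp_neg
    (integrableOn_Ioi_pow_mul_exp_mul_sub_abs k (abs_lt.1 ha).2)
    (integrableOn_Ioi_pow_mul_exp_mul_sub_abs_comp_neg k (abs_lt.1 ha).1)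

theorem integral_pow_mul_exp_mul_sub_abs (k : ℕ) (ha : |a| < 1) :
    ∫ u, u ^ k * exp (a * u - |u|) = laplaceMoment a k := by
  obtain ⟨ha₁, ha₂⟩ := abs_lt.1 ha
  have hpos : ∫ u in Ioi 0, u ^ k * exp (a * u - |u|) = k ! / (1 - a) ^ (k + 1) := by
    rw [← integral_pow_mul_exp_neg_mul_Ioi k (sub_pos.2 ha₂)]
    refine setIntegral_congr_fun measurableSet_Ioi (fun u (hu : 0 < u) => ?_)
    rw [abs_of_pos hu]
    ring_nf
  have hneg : ∫ u in Ioi 0, (-u) ^ k * exp (a * -u - |-u|) =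
      (-1) ^ k * k ! / (1 + a) ^ (k + 1) := by
    rw [mul_div_assoc, ← integral_pow_mul_exp_neg_mul_Ioi k (by linarith : 0 < 1 + a),
      ← integral_const_mul]
    refine setIntegral_congr_fun measurableSet_Ioi (fun u (hu : 0 < u) => ?_)
    rw [abs_neg, abs_of_pos hu, neg_pow]
    ring_nf
  rw [integral_eq_integral_Ioi_add_integral_Ioi_comp_neg
    (integrableOn_Ioi_pow_mul_exp_mul_sub_abs k ha₂)
    (integrableOn_Ioi_pow_mul_exp_mul_sub_abs_comp_neg k ha₁), hpos, hneg, laplaceMoment]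

theorem tendsto_integral_pow_mul_exp_mul_sub_abs_sub_mul_sq (k : ℕ) (ha : |a| < 1) {c : ℝ}
    (hc : 0 ≤ c) :
    Tendsto (fun T => ∫ u, u ^ k * exp (a * u - |u| - T * c * u ^ 2)) (𝓝[≥] 0)
      (𝓝 (laplaceMoment a k)) := by
  rw [← integral_pow_mul_exp_mul_sub_abs k ha]
  refine tendsto_integral_filter_of_dominated_convergence _
    (Eventually.of_forall fun T => by fun_prop) ?_ (integrable_pow_mul_exp_mul_sub_abs k ha).norm
    (Eventually.of_forall fun u => ?_)
  · filter_upwards [self_mem_nhdsWithin] with T (hT : 0 ≤ T)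
    refine Eventually.of_forall fun u => ?_
    simp only [norm_mul, Real.norm_eq_abs, abs_exp]
    have hdamp : 0 ≤ T * c * u ^ 2 := by positivity
    exact mul_le_mul_of_nonneg_left (exp_le_exp.2 (by linarith)) (by positivity)
  · have hcont : Continuous fun T => u ^ k * exp (a * u - |u| - T * c * u ^ 2) := by fun_prop
    simpa using hcont.continuousWithinAt.tendsto (x := 0) (s := Ici 0)

theorem laplaceMoment_zero (ha : |a| < 1) : laplaceMoment a 0 = 2 / (1 - a ^ 2) := by
  obtain ⟨ha₁, ha₂⟩ := abs_lt.1 ha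
  have h₁ : 1 - a ≠ 0 := by linarith
  have h₂ : 1 + a ≠ 0 := by linarith
  have h₃ : 1 - a ^ 2 ≠ 0 := by nlinarith
  simp only [laplaceMoment, factorial_zero, cast_one, pow_zero, zero_add, pow_one, one_mul]
  field_simp
  ring

theorem laplaceMoment_zero_pos (ha : |a| < 1) : 0 < laplaceMoment a 0 := by
  have : a ^ 2 < 1 := by rwa [sq_lt_one_iff_abs_lt_one]
  rw [laplaceMoment_zero ha]
  exact div_pos two_pos (by linarith)

theorem laplaceMoment_one_div_laplaceMoment_zero (ha : |a| < 1) :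
    laplaceMoment a 1 / laplaceMoment a 0 = 2 * a / (1 - a ^ 2) := by
  obtain ⟨ha₁, ha₂⟩ := abs_lt.1 ha
  have h₁ : 1 - a ≠ 0 := by linarith
  have h₂ : 1 + a ≠ 0 := by linarith
  have h₃ : 1 - a ^ 2 ≠ 0 := by nlinarith
  rw [laplaceMoment_zero ha]
  simp only [laplaceMoment, factorial_one, cast_one]
  field_simp
  ring

theorem laplaceMoment_two_div_laplaceMoment_zero (ha : |a| < 1) :
    laplaceMoment a 2 / laplaceMoment a 0 = (1 - a) / (1 + a) ^ 2 + (1 + a) / (1 - a) ^ 2 := by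
  obtain ⟨ha₁, ha₂⟩ := abs_lt.1 ha
  have h₁ : 1 - a ≠ 0 := by linarith
  have h₂ : 1 + a ≠ 0 := by linarith
  have h₃ : 1 - a ^ 2 ≠ 0 := by nlinarith
  rw [laplaceMoment_zero ha]
  simp only [laplaceMoment, factorial_two, cast_ofNat]
  field_simp
  ring

end LaplaceMoment

theorem integral_pow_mul_exp_neg_obj1_div (k : ℕ) {y t T : ℝ} (ht : t ≠ 0) (hT : 0 < T) :
    ∫ x, x ^ k * exp (-obj1 y t x / T) =
      T ^ (k + 1) * exp (-(y ^ 2 / (2 * t * T))) *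
        ∫ u, u ^ k * exp (y / t * u - |u| - T * (2 * t)⁻¹ * u ^ 2) := by
  have rescale : ∀ u, (T * u) ^ k * exp (-obj1 y t (T * u) / T) =
      T ^ k * exp (-(y ^ 2 / (2 * t * T))) *
        (u ^ k * exp (y / t * u - |u| - T * (2 * t)⁻¹ * u ^ 2)) := by
    intro u
    have hexp : -obj1 y t (T * u) / T =
        -(y ^ 2 / (2 * t * T)) + (y / t * u - |u| - T * (2 * t)⁻¹ * u ^ 2) := by
      rw [obj1, abs_mul, abs_of_pos hT]
      field_simp
      ring
    rw [hexp, exp_add, mul_pow]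
    ring
  have h := Measure.integral_comp_mul_left (fun x => x ^ k * exp (-obj1 y t x / T)) T
  simp only [rescale, integral_const_mul, abs_inv, abs_of_pos hT, smul_eq_mul] at h
  rw [eq_inv_mul_iff_mul_eq₀ hT.ne'] at h
  rw [← h]
  ring

theorem tendsto_moment_ratio_obj1 (k : ℕ) {y t : ℝ} (ht : 0 < t) (ha : |y / t| < 1) :
    Tendsto (fun T => 1 / T ^ k *
        ((∫ x, x ^ k * exp (-obj1 y t x / T)) / ∫ x, exp (-obj1 y t x / T)))
      (𝓝[>] 0) (𝓝 (laplaceMoment (y / t) k / laplaceMoment (y / t) 0)) := by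
  have hc : 0 ≤ (2 * t)⁻¹ := by positivity
  have hlim := (tendsto_integral_pow_mul_exp_mul_sub_abs_sub_mul_sq k ha hc).div
    (tendsto_integral_pow_mul_exp_mul_sub_abs_sub_mul_sq 0 ha hc) (laplaceMoment_zero_pos ha).ne'
  refine (hlim.mono_left (nhdsWithin_mono _ Ioi_subset_Ici_self)).congr' ?_
  filter_upwards [self_mem_nhdsWithin] with T (hT : 0 < T)
  have hden := integral_pow_mul_exp_neg_obj1_div 0 (y := y) ht.ne' hT
  simp only [pow_zero, one_mul, zero_add, pow_one, Pi.div_apply] at hden ⊢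
  rw [integral_pow_mul_exp_neg_obj1_div k ht.ne' hT, hden]
  generalize ∫ u, u ^ k * exp (y / t * u - |u| - T * (2 * t)⁻¹ * u ^ 2) = N
  generalize ∫ u, exp (y / t * u - |u| - T * (2 * t)⁻¹ * u ^ 2) = D
  field_simp
  ring

/-- For `0 < y < t`, the mean of `X_T(y,t)` is asymptotically `T·m₁(y/t)` and its second
moment is asymptotically `T²·m₂(y/t)`, with `m₁(u) = 2u/(1 − u²)` and
`m₂(u) = (1 − u)/(1 + u)² + (1 + u)/(1 − u)²`. -/
theorem stmt17 (t y : ℝ) (ht : 0 < t) (hy0 : 0 < y) (hyt : y < t) :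
    Tendsto
      (fun T : ℝ =>
        1 / T * ((∫ x : ℝ, x * Real.exp (-(obj1 y t x) / T)) /
          ∫ x : ℝ, Real.exp (-(obj1 y t x) / T)))
      (nhdsWithin 0 (Set.Ioi 0))
      (nhds (2 * (y / t) / (1 - (y / t) ^ 2))) ∧
    Tendsto
      (fun T : ℝ =>
        1 / T ^ 2 * ((∫ x : ℝ, x ^ 2 * Real.exp (-(obj1 y t x) / T)) /
          ∫ x : ℝ, Real.exp (-(obj1 y t x) / T)))
      (nhdsWithin 0 (Set.Ioi 0))
      (nhds ((1 - y / t) / (1 + y / t) ^ 2 + (1 + y / t) / (1 - y / t) ^ 2)) := by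
  have ha : |y / t| < 1 := by
    rw [abs_lt, lt_div_iff₀ ht, div_lt_one ht]
    constructor <;> linarith
  constructor
  · simpa [laplaceMoment_one_div_laplaceMoment_zero ha] using tendsto_moment_ratio_obj1 1 ht ha
  · simpa [laplaceMoment_two_div_laplaceMoment_zero ha] using tendsto_moment_ratio_obj1 2 ht ha
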